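/- Let r ≥ 1 and n ≥ r − 1 be integers and f : ℝ² → ℝ any function. For all reals u, v with r − 1 < u < n + 1 and r − 1 < v < n + 1, the function p ↦ Σ_{i=0}^{n} Σ_{j=0}^{n} B_{0,r}(u − i)·B_{0,r}(v − j)·(p − f(i,j))² of the real variable p has a unique minimizer p* ∈ ℝ, and p* equals the tensor-product B-spline surface value Σ_{i=0}^{n} Σ_{j=0}^{n} B_{i,r}(u)·B_{j,r}(v)·f(i,j); that is, every uniform B-spline surface of order r is, at each parameter point, the minimizer of a positive quadratic moving least-squares error with product weights. -/

import Mathlib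

/-!
On `(r - 1, n + 1)` the B-splines `B 0 r, …, B n r` form a partition of unity: a Cox–de Boor step
preserves `∑ i, B i r t` because the two boundary terms `B 0 (r - 1) t` and `B (n + 1) (r - 1) t`
vanish there. Hence the product weights `B i r u * B j r v` sum to one, and for weights summing
to one `∑ w (p - y) ^ 2 = ∑ w (m - y) ^ 2 + (p - m) ^ 2` with `m = ∑ w y`, so the weighted mean `m`,
which is the surface value, is the strict minimizer.
-/

/-- Uniform B-spline basis functions `B i j` with integer knots `tᵢ = i`,
defined by the Cox–de Boor recursion. -/
noncomputable def B : ℕ → ℕ → ℝ → ℝ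
  | _, 0, _ => 0
  | i, 1, t => if (i : ℝ) ≤ t ∧ t < (i : ℝ) + 1 then 1 else 0
  | i, (j+2), t =>
      ((t - (i : ℝ)) / ((j : ℝ) + 1)) * B i (j+1) t
        + (((i : ℝ) + ((j : ℝ) + 2) - t) / ((j : ℝ) + 1)) * B (i+1) (j+1) t

open Finset

theorem B_eq_B_zero (r i : ℕ) (t : ℝ) : B i r t = B 0 r (t - i) := by
  induction r generalizing i t with
  | zero => simp [B]
  | succ k ih =>
    cases k with
    | zero =>
      simp only [B, Nat.cast_zero, zero_add]
      exact if_congr (by constructor <;> rintro ⟨h₁, h₂⟩ <;> constructor <;> linarith) rfl rfl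
    | succ m =>
      simp only [B, ih i t, ih (i + 1) t, ih 1 (t - i)]
      push_cast
      ring_nf

theorem B_eq_zero_of_notMem_Ico {r i : ℕ} {t : ℝ} (ht : t ∉ Set.Ico (i : ℝ) (i + r)) :
    B i r t = 0 := by
  induction r generalizing i with
  | zero => simp [B]
  | succ k ih =>
    cases k with
    | zero => simpa [B] using ht
    | succ m =>
      have h₀ : t ∉ Set.Ico (i : ℝ) (i + (m + 1 : ℕ)) :=
        fun h => ht (Set.Ico_subset_Ico_right (by push_cast; linarith) h)
      have h₁ : t ∉ Set.Ico ((i + 1 : ℕ) : ℝ) ((i + 1 : ℕ) + (m + 1 : ℕ)) :=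
        fun h => ht (Set.Ico_subset_Ico (by push_cast; linarith) (by push_cast; linarith) h)
      simp only [B, ih h₀, ih h₁, mul_zero, add_zero]

theorem B_one_eq_ite (i : ℕ) {t : ℝ} (ht : 0 ≤ t) : B i 1 t = if ⌊t⌋₊ = i then 1 else 0 := by
  simp only [B, Nat.floor_eq_iff ht]

theorem sum_range_B_one {n : ℕ} {t : ℝ} (ht₁ : 0 ≤ t) (ht₂ : t < n + 1) :
    ∑ i ∈ range (n + 1), B i 1 t = 1 := by
  have hfloor : ⌊t⌋₊ ∈ range (n + 1) := mem_range.2 ((Nat.floor_lt ht₁).2 (by exact_mod_cast ht₂))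
  simp only [B_one_eq_ite _ ht₁, sum_ite_eq, hfloor, if_true]

theorem sum_range_B_succ_succ {m n : ℕ} {t : ℝ} (ht₁ : (m : ℝ) + 1 ≤ t) (ht₂ : t < n + 1) :
    ∑ i ∈ range (n + 1), B i (m + 2) t = ∑ i ∈ range (n + 1), B i (m + 1) t := by
  have h₀ : B 0 (m + 1) t = 0 :=
    B_eq_zero_of_notMem_Ico fun h => by push_cast at h; linarith [h.2]
  have hₙ : B (n + 1) (m + 1) t = 0 :=
    B_eq_zero_of_notMem_Ico fun h => by push_cast at h; linarith [h.1]
  have hm : (m : ℝ) + 1 ≠ 0 := by positivity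
  rw [sum_range_succ' (fun i => B i (m + 1) t), h₀, add_zero]
  simp only [B]
  rw [sum_add_distrib, sum_range_succ', sum_range_succ, h₀, hₙ]
  simp only [mul_zero, add_zero, ← sum_add_distrib]
  refine sum_congr rfl fun i _ => ?_
  field_simp
  push_cast
  ring

theorem sum_range_B {r n : ℕ} {t : ℝ} (hr : 1 ≤ r) (ht₁ : (r : ℝ) - 1 ≤ t) (ht₂ : t < n + 1) :
    ∑ i ∈ range (n + 1), B i r t = 1 := by
  obtain ⟨m, rfl⟩ := Nat.exists_eq_add_of_le' hr
  clear hr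
  induction m with
  | zero => exact sum_range_B_one (by simpa using ht₁) ht₂
  | succ m ih =>
    push_cast at ht₁ ih
    rw [sum_range_B_succ_succ (by linarith) ht₂]
    exact ih (by linarith)

theorem sum_mul_sub_sq_eq {ι : Type*} (s : Finset ι) {w : ι → ℝ} (hw : ∑ i ∈ s, w i = 1)
    (y : ι → ℝ) (p : ℝ) :
    ∑ i ∈ s, w i * (p - y i) ^ 2 =
      ∑ i ∈ s, w i * (∑ j ∈ s, w j * y j - y i) ^ 2 + (p - ∑ i ∈ s, w i * y i) ^ 2 := by
  have expand : ∀ q, ∑ i ∈ s, w i * (q - y i) ^ 2 =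
      q ^ 2 - 2 * q * ∑ i ∈ s, w i * y i + ∑ i ∈ s, w i * y i ^ 2 := by
    intro q
    calc ∑ i ∈ s, w i * (q - y i) ^ 2
        = ∑ i ∈ s, (q ^ 2 * w i - 2 * q * (w i * y i) + w i * y i ^ 2) :=
          sum_congr rfl fun i _ => by ring
      _ = _ := by rw [sum_add_distrib, sum_sub_distrib, ← mul_sum, ← mul_sum, hw, mul_one]
  rw [expand, expand]
  ring

theorem sum_mul_sub_sq_lt {ι : Type*} (s : Finset ι) {w : ι → ℝ} (hw : ∑ i ∈ s, w i = 1)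
    (y : ι → ℝ) {p : ℝ} (hp : p ≠ ∑ i ∈ s, w i * y i) :
    ∑ i ∈ s, w i * (∑ j ∈ s, w j * y j - y i) ^ 2 < ∑ i ∈ s, w i * (p - y i) ^ 2 := by
  rw [sum_mul_sub_sq_eq s hw y p]
  have : 0 < (p - ∑ i ∈ s, w i * y i) ^ 2 := by positivity [sub_ne_zero.2 hp]
  linarith

theorem bspline_surface_minimizes_quadratic_general (r n : ℕ) (hr : 1 ≤ r)
    (f : ℝ → ℝ → ℝ) (u v : ℝ)
    (hu1 : (r : ℝ) - 1 < u) (hu2 : u < (n : ℝ) + 1)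
    (hv1 : (r : ℝ) - 1 < v) (hv2 : v < (n : ℝ) + 1)
    (Q : ℝ → ℝ)
    (hQ : Q = fun p => ∑ i ∈ Finset.range (n + 1), ∑ j ∈ Finset.range (n + 1),
      B 0 r (u - i) * B 0 r (v - j) * (p - f i j) ^ 2)
    (pstar : ℝ)
    (hpstar : pstar = ∑ i ∈ Finset.range (n + 1), ∑ j ∈ Finset.range (n + 1),
      B i r u * B j r v * f i j) :
    ∀ p : ℝ, p ≠ pstar → Q pstar < Q p := by
  set w : ℕ × ℕ → ℝ := fun ij => B ij.1 r u * B ij.2 r v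
  have hw : ∑ ij ∈ range (n + 1) ×ˢ range (n + 1), w ij = 1 := by
    simp only [w, sum_product]
    rw [← sum_mul_sum, sum_range_B hr hu1.le hu2, sum_range_B hr hv1.le hv2, one_mul]
  have hQw : Q = fun q => ∑ ij ∈ range (n + 1) ×ˢ range (n + 1), w ij * (q - f ij.1 ij.2) ^ 2 := by
    simp only [hQ, sum_product, w, ← B_eq_B_zero]
  have hpstarw : pstar = ∑ ij ∈ range (n + 1) ×ˢ range (n + 1), w ij * f ij.1 ij.2 := by
    rw [hpstar, sum_product]
  intro p hp
  rw [hQw, hpstarw]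
  exact sum_mul_sub_sq_lt _ hw _ (hpstarw ▸ hp)

/-- Every uniform B-spline surface of order `r` is, at each parameter point
`(u, v)` with `r − 1 < u, v < n + 1`, the unique minimizer of the positive
quadratic moving least-squares error with product weights
`B 0 r (u − i) · B 0 r (v − j)`: the error is uniquely minimized by the
tensor-product B-spline value `p* = ∑ᵢ ∑ⱼ B i r u · B j r v · f i j`. -/
theorem bspline_surface_minimizes_quadratic (r n : ℕ) (hr : 1 ≤ r)
    (hn : r - 1 ≤ n) (f : ℝ → ℝ → ℝ) (u v : ℝ)
    (hu1 : (r : ℝ) - 1 < u) (hu2 : u < (n : ℝ) + 1)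
    (hv1 : (r : ℝ) - 1 < v) (hv2 : v < (n : ℝ) + 1)
    (Q : ℝ → ℝ)
    (hQ : Q = fun p => ∑ i ∈ Finset.range (n + 1), ∑ j ∈ Finset.range (n + 1),
      B 0 r (u - i) * B 0 r (v - j) * (p - f i j) ^ 2)
    (pstar : ℝ)
    (hpstar : pstar = ∑ i ∈ Finset.range (n + 1), ∑ j ∈ Finset.range (n + 1),
      B i r u * B j r v * f i j) :
    ∀ p : ℝ, p ≠ pstar → Q pstar < Q p :=
  bspline_surface_minimizes_quadratic_general r n hr f u v hu1 hu2 hv1 hv2 Q hQ pstar hpstar
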